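/- For every real α ≥ 1 and integer n ≥ 1, ∑_{i=1}^n i^α ≤ (α/(α+1)) · (n+1)^{2α} / ((n+2)^α − (n+1)^α). -/

import Mathlib

/-!
Write `B(x) = α/(α+1) · x^{2α} / ((x+1)^α - x^α)`; the bound is `B(n+1)`, so by induction it
suffices that `B(x) + x^α ≤ B(x+1)`. With `a, b, c = x^α, (x+1)^α, (x+2)^α` and `w = 1/(x+1)`,
Bernoulli's inequality gives `b - a ≤ α w b` and `a c (1 + α w²) ≤ b²`, the latter because
`a c = b² (1 - w²)^α` and `(1 - w²)^α (1 + w²)^α = (1 - w⁴)^α ≤ 1`. These two bounds imply the step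
inequality, cleared of denominators, by elementary algebra.
-/

open Real Finset

lemma one_sub_mul_le_rpow_one_sub {s α : ℝ} (hs : s ≤ 1) (hα : 1 ≤ α) :
    1 - α * s ≤ (1 - s) ^ α := by
  simpa [sub_eq_add_neg] using one_add_mul_self_le_rpow_one_add (s := -s) (by linarith) hα

lemma rpow_one_sub_mul_one_add_mul_le_one {s α : ℝ} (hs₀ : 0 ≤ s) (hs₁ : s ≤ 1) (hα : 1 ≤ α) :
    (1 - s) ^ α * (1 + α * s) ≤ 1 :=
  calc (1 - s) ^ α * (1 + α * s)
      ≤ (1 - s) ^ α * (1 + s) ^ α := by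
        gcongr
        exact one_add_mul_self_le_rpow_one_add (by linarith) hα
    _ = (1 - s ^ 2) ^ α := by rw [← mul_rpow (by linarith) (by linarith)]; ring_nf
    _ ≤ 1 := rpow_le_one (by nlinarith) (by nlinarith) (by linarith)

lemma step_ineq_of_bounds {a b c α w : ℝ} (ha : 0 ≤ a) (hab : a ≤ b) (hα : 0 ≤ α)
    (hac : a * c * (1 + α * w ^ 2) ≤ b ^ 2) (hba : b - a ≤ α * w * b) :
    a * (c - b) * ((α + 1) * b - a) ≤ α * b ^ 2 * (b - a) := by
  have hpos : 0 < 1 + α * w ^ 2 := by positivity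
  refine le_of_mul_le_mul_right ?_ hpos
  -- with `d = b - a` this reduces to `d² ≤ (α w b)² + α w² a d`
  have h1 : a * (c - b) * (1 + α * w ^ 2) ≤ b * ((b - a) - α * w ^ 2 * a) := by nlinarith
  have h2 : (b - a) ^ 2 ≤ (α * w * b) ^ 2 := pow_le_pow_left₀ (by linarith) hba 2
  nlinarith [mul_le_mul_of_nonneg_right h1 (by nlinarith : 0 ≤ (α + 1) * b - a),
    mul_le_mul_of_nonneg_left h2 (by linarith : 0 ≤ b),
    mul_nonneg (mul_nonneg (mul_nonneg hα (sq_nonneg w)) ha)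
      (mul_nonneg (sub_nonneg.2 hab) (by linarith : 0 ≤ b))]

section

variable {α x : ℝ}

lemma rpow_add_one_sub_rpow_le (hα : 1 ≤ α) (hx : 0 ≤ x) :
    (x + 1) ^ α - x ^ α ≤ α * (x + 1)⁻¹ * (x + 1) ^ α := by
  have hx₁ : 0 < x + 1 := by linarith
  have hsplit : x = (x + 1) * (1 - (x + 1)⁻¹) := by field_simp; ring
  have hw : (x + 1)⁻¹ ≤ 1 := inv_le_one_of_one_le₀ (by linarith)
  have := mul_le_mul_of_nonneg_left (one_sub_mul_le_rpow_one_sub hw hα)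
    (rpow_nonneg hx₁.le α)
  rw [← mul_rpow hx₁.le (by linarith), ← hsplit] at this
  linarith

lemma rpow_mul_rpow_add_two_le (hα : 1 ≤ α) (hx : 0 ≤ x) :
    x ^ α * (x + 2) ^ α * (1 + α * (x + 1)⁻¹ ^ 2) ≤ ((x + 1) ^ α) ^ 2 := by
  have hx₁ : 0 < x + 1 := by linarith
  have hsplit : x * (x + 2) = (x + 1) ^ 2 * (1 - (x + 1)⁻¹ ^ 2) := by field_simp; ring
  set w := (x + 1)⁻¹
  have hw₀ : 0 ≤ w ^ 2 := sq_nonneg w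
  have hw₁ : w ^ 2 ≤ 1 := pow_le_one₀ (by positivity) (inv_le_one_of_one_le₀ (by linarith))
  calc x ^ α * (x + 2) ^ α * (1 + α * w ^ 2)
      = ((x + 1) ^ α) ^ 2 * ((1 - w ^ 2) ^ α * (1 + α * w ^ 2)) := by
        rw [← mul_rpow hx (by linarith), hsplit, mul_rpow (by positivity) (by linarith),
          rpow_pow_comm hx₁.le]
        ring
    _ ≤ ((x + 1) ^ α) ^ 2 :=
        mul_le_of_le_one_right (by positivity) (rpow_one_sub_mul_one_add_mul_le_one hw₀ hw₁ hα)

end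

noncomputable def powerSumBound (α x : ℝ) : ℝ :=
  α / (α + 1) * (x ^ (2 * α) / ((x + 1) ^ α - x ^ α))

lemma powerSumBound_add_rpow_le {α x : ℝ} (hα : 1 ≤ α) (hx : 0 ≤ x) :
    powerSumBound α x + x ^ α ≤ powerSumBound α (x + 1) := by
  have hα₀ : 0 < α := by linarith
  have hab : x ^ α < (x + 1) ^ α := rpow_lt_rpow hx (by linarith) hα₀
  have hbc : (x + 1) ^ α < (x + 1 + 1) ^ α := rpow_lt_rpow (by linarith) (by linarith) hα₀
  have key := step_ineq_of_bounds (rpow_nonneg hx α) hab.le hα₀.le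
    (rpow_mul_rpow_add_two_le hα hx) (rpow_add_one_sub_rpow_le hα hx)
  rw [show x + 2 = x + 1 + 1 by ring] at key
  unfold powerSumBound
  rw [mul_comm 2 α, rpow_mul hx, rpow_mul (by linarith), rpow_two, rpow_two]
  set a := x ^ α
  set b := (x + 1) ^ α
  set c := (x + 1 + 1) ^ α
  have hα₁ : 0 < α + 1 := by linarith
  have hd₁ : 0 < b - a := sub_pos.2 hab
  have hd₂ : 0 < c - b := sub_pos.2 hbc
  have hgap : α / (α + 1) * (b ^ 2 / (c - b)) - (α / (α + 1) * (a ^ 2 / (b - a)) + a)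
      = (α * b ^ 2 * (b - a) - a * (c - b) * ((α + 1) * b - a))
        / ((α + 1) * (b - a) * (c - b)) := by
    field_simp [hd₁.ne', hd₂.ne']
    ring
  rw [← sub_nonneg, hgap]
  exact div_nonneg (sub_nonneg.2 key) (by positivity)

theorem sum_Icc_rpow_le_powerSumBound {α : ℝ} (hα : 1 ≤ α) (n : ℕ) :
    ∑ i ∈ Icc 1 n, (i : ℝ) ^ α ≤ powerSumBound α (n + 1) := by
  induction n with
  | zero =>
    simp only [Icc_eq_empty_of_lt zero_lt_one, sum_empty, Nat.cast_zero, zero_add, powerSumBound]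
    have hden : (1 : ℝ) ^ α < (1 + 1) ^ α := rpow_lt_rpow zero_le_one (by norm_num) (by linarith)
    have hcoef : 0 ≤ α / (α + 1) := div_nonneg (by linarith) (by linarith)
    positivity
  | succ n ih =>
    rw [sum_Icc_succ_top (by omega), Nat.cast_succ]
    exact (add_le_add_left ih _).trans (powerSumBound_add_rpow_le hα (by positivity))

theorem power_sum_upper_bound_shifted_general (α : ℝ) (hα : 1 ≤ α) (n : ℕ) :
    ∑ i ∈ Finset.Icc 1 n, (i : ℝ) ^ α
      ≤ α / (α + 1) * (((n : ℝ) + 1) ^ (2 * α) / (((n : ℝ) + 2) ^ α - ((n : ℝ) + 1) ^ α)) := by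
  have h := sum_Icc_rpow_le_powerSumBound hα n
  rwa [powerSumBound, add_assoc, one_add_one_eq_two] at h

theorem power_sum_upper_bound_shifted (α : ℝ) (hα : 1 ≤ α) (n : ℕ) (hn : 1 ≤ n) :
    ∑ i ∈ Finset.Icc 1 n, (i : ℝ) ^ α
      ≤ α / (α + 1) * (((n : ℝ) + 1) ^ (2 * α) / (((n : ℝ) + 2) ^ α - ((n : ℝ) + 1) ^ α)) :=
  power_sum_upper_bound_shifted_general α hα n
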